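/- arXiv:2008.11679 — 6 statements merged into one kernel-verified Lean document; each statement's English description precedes it below -/
import Mathlib

section
/- Let K be a field and G a finite subgroup of the group Aut(K) of ring automorphisms of K, with fixed subfield K^G = {x ∈ K | g(x) = x for all g ∈ G}. Then a ring automorphism h of K lies in the normalizer of G in Aut(K) if and only if h maps K^G onto K^G. -/
/-!
Conjugating by `h` carries the fixed field of `G` onto the fixed field of `h G h⁻¹`. By Artin's
theorem a finite subgroup of `Aut(K)` is the full group of automorphisms fixing its fixed field,
so finite subgroups are determined by their fixed fields; hence `h G h⁻¹ = G` exactly when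
`h` preserves `K^G`.
-/

open MulAction Pointwise

theorem MulAction.smul_fixedPoints_subgroup {M α : Type*} [Group M] [MulAction M α] (g : M)
    (H : Subgroup M) :
    g • fixedPoints H α = fixedPoints (H.map (MulAut.conj g : M →* M)) α := by
  ext x
  simp [Set.mem_smul_set_iff_inv_smul_mem, mem_fixedPoints, mul_smul, ← smul_eq_iff_eq_inv_smul]

namespace RingAut

variable {K : Type*} [Field K]

theorem fixingSubgroup_fixedPoints (G : Subgroup (RingAut K)) [Finite G] :
    fixingSubgroup (RingAut K) (fixedPoints G K) = G := by
  refine le_antisymm (fun f hf ↦ ?_) fun g hg ⟨_, hx⟩ ↦ hx ⟨g, hg⟩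
  let f' : K ≃ₐ[FixedPoints.subfield G K] K :=
    AlgEquiv.ofRingEquiv (f := f) fun x ↦ hf ⟨x, x.2⟩
  obtain ⟨g, hg⟩ := FixedPoints.toAlgAut_surjective G K f'
  have hgf : (g : RingAut K) = f := RingEquiv.ext fun x ↦ DFunLike.congr_fun hg x
  exact hgf ▸ g.2

theorem fixedPoints_subgroup_inj {G H : Subgroup (RingAut K)} [Finite G] [Finite H] :
    fixedPoints G K = fixedPoints H K ↔ G = H :=
  ⟨fun h ↦ by rw [← fixingSubgroup_fixedPoints G, h, fixingSubgroup_fixedPoints],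
    fun h ↦ by rw [h]⟩

end RingAut

/-- A ring automorphism `h` of a field `K` normalizes a finite subgroup
`G` of `Aut(K)` iff `h` maps the fixed subfield `K^G` onto itself. -/
theorem mem_normalizer_iff_image_fixedField_eq {K : Type*} [Field K]
    (G : Subgroup (RingAut K)) [Finite G] (h : RingAut K) :
    h ∈ Subgroup.normalizer (G : Set (RingAut K)) ↔
      ⇑h '' {x : K | ∀ g ∈ G, g x = x} = {x : K | ∀ g ∈ G, g x = x} := by
  have : Finite (G.map (MulAut.conj h : RingAut K →* RingAut K)) :=
    .of_equiv _ (G.equivMapOfInjective _ (MulAut.conj h).injective).toEquiv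
  have hG : {x : K | ∀ g ∈ G, g x = x} = fixedPoints G K := by
    ext; simp [RingAut.smul_def]
  rw [Subgroup.mem_normalizer_iff_map_conj_eq, ← RingAut.fixedPoints_subgroup_inj,
    ← smul_fixedPoints_subgroup, hG, ← Set.image_smul]
  rfl
end

section
/- Let p be a prime, K a field of characteristic p, and G a finite subgroup of the group Aut(K) of ring automorphisms of K, with fixed subfield K^G = {x ∈ K | g(x) = x for all g ∈ G}. Let n be a natural number and let L = (K^G)^{p^n} = {x^{p^n} | x ∈ K^G} be the subfield of p^n-th powers of elements of K^G. Then a ring automorphism h of K lies in the normalizer of G in Aut(K) if and only if h(L) = L. -/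
/-!
Conjugating `G` by `h` moves its fixed field `K^G` to `h(K^G)`, and by Artin's theorem a finite
group of automorphisms is recovered from its fixed field. Hence `h` normalizes `G` iff
`h(K^G) = K^G`. Finally `x ↦ x^{pⁿ}` is an injective ring endomorphism of `K` commuting with `h`,
so `h(K^G) = K^G` iff `h((K^G)^{pⁿ}) = (K^G)^{pⁿ}`.
-/

namespace RingAut

variable {K : Type*} [Field K]

def fixedSet (G : Subgroup (RingAut K)) : Set K :=
  {x | ∀ g ∈ G, g x = x}

theorem image_fixedSet (h : RingAut K) (G : Subgroup (RingAut K)) :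
    h '' fixedSet G = fixedSet (G.map (MulAut.conj h)) := by
  ext x
  simp only [fixedSet, Subgroup.mem_map, forall_exists_index, and_imp, forall_apply_eq_imp_iff₂,
    MonoidHom.coe_coe, MulAut.conj_apply, mul_apply, inv_apply, ← h.eq_symm_apply]
  constructor
  · rintro ⟨y, hy, rfl⟩
    simpa using hy
  · exact fun hx => ⟨h.symm x, hx, h.apply_symm_apply x⟩

-- Artin: `G` maps onto `Aut(K / K^G)`.
theorem mem_of_forall_mem_fixedSet {G : Subgroup (RingAut K)} [Finite G] {σ : RingAut K}
    (hσ : ∀ x ∈ fixedSet G, σ x = x) : σ ∈ G := by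
  obtain ⟨⟨g, hg⟩, hgσ⟩ := FixedPoints.toAlgAut_surjective G K
    (AlgEquiv.ofRingEquiv (f := σ) fun ⟨x, hx⟩ => hσ x fun g hg => hx ⟨g, hg⟩)
  obtain rfl : g = σ := RingEquiv.ext fun x => DFunLike.congr_fun hgσ x
  exact hg

theorem le_of_fixedSet_subset {G H : Subgroup (RingAut K)} [Finite H]
    (hGH : fixedSet H ⊆ fixedSet G) : G ≤ H :=
  fun g hg => mem_of_forall_mem_fixedSet fun _ hx => hGH hx g hg

theorem fixedSet_inj {G H : Subgroup (RingAut K)} [Finite G] [Finite H] :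
    fixedSet G = fixedSet H ↔ G = H :=
  ⟨fun e => le_antisymm (le_of_fixedSet_subset e.ge) (le_of_fixedSet_subset e.le),
    fun e => e ▸ rfl⟩

theorem mem_normalizer_iff_image_fixedSet_eq {G : Subgroup (RingAut K)} [Finite G]
    {h : RingAut K} :
    h ∈ Subgroup.normalizer (G : Set (RingAut K)) ↔ h '' fixedSet G = fixedSet G := by
  have : Finite (G.map (MulAut.conj h : RingAut K →* RingAut K)) := by
    rw [← SetLike.coe_sort_coe, Subgroup.coe_map]; infer_instance
  rw [image_fixedSet, fixedSet_inj, Subgroup.mem_normalizer_iff_map_conj_eq]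

end RingAut

/-- In characteristic `p`, a ring automorphism `h` of a field `K` normalizes a
finite subgroup `G` of `Aut(K)` iff `h` maps the subfield
`L = (K^G)^{pⁿ}` of `pⁿ`-th powers of `G`-fixed elements onto itself. -/
theorem mem_normalizer_iff_image_pow_fixedField_eq {K : Type*} [Field K]
    (p : ℕ) [Fact p.Prime] [CharP K p] (G : Subgroup (RingAut K)) [Finite G]
    (n : ℕ) (h : RingAut K) :
    h ∈ Subgroup.normalizer (G : Set (RingAut K)) ↔
      ⇑h '' ((fun x : K => x ^ p ^ n) '' {x : K | ∀ g ∈ G, g x = x}) =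
        (fun x : K => x ^ p ^ n) '' {x : K | ∀ g ∈ G, g x = x} := by
  have pow_injective : Function.Injective fun x : K => x ^ p ^ n := iterateFrobenius_inj K p n
  rw [Set.image_comm (g := fun x : K => x ^ p ^ n) (g' := fun x : K => x ^ p ^ n) (map_pow h · _),
    pow_injective.image_injective.eq_iff]
  exact RingAut.mem_normalizer_iff_image_fixedSet_eq
end

section
/- Let R be a commutative ring with 3 = 0, let b be a unit of R, and let c, d ∈ R with d³ = 0. Set h = b·X + c + d·X³ and h′ = b⁻¹·X + b⁻⁴·(c³d − b³c) − b⁻⁴d·X³ in R[X]. Then h.comp h′ = X and h′.comp h = X; that is, h′ is the two-sided compositional inverse of the substitution t ↦ bt + c + dt³. -/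
/-!
In characteristic 3 cubing is additive, so for `d³ = 0` the cube of `b t + d t³` is `b³ t³`.
Hence the odd cubic `t ↦ b t + d t³` is inverted by `s ↦ b⁻¹ s − b⁻⁴ d s³`, and since
`b⁻⁴ (c³ d − b³ c) = b⁻⁴ d c³ − b⁻¹ c`, the substitution `h′` is this inverse precomposed with
the translation `t ↦ t − c`, which undoes the constant term of `h`.
-/

open Polynomial

section CharThree

variable {S : Type*} [CommRing S]

theorem add_pow_three_of_three_eq_zero (h3 : (3 : S) = 0) (x y : S) :
    (x + y) ^ 3 = x ^ 3 + y ^ 3 := by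
  linear_combination (x ^ 2 * y + x * y ^ 2) * h3

theorem sub_pow_three_of_three_eq_zero (h3 : (3 : S) = 0) (x y : S) :
    (x - y) ^ 3 = x ^ 3 - y ^ 3 := by
  linear_combination (x * y ^ 2 - x ^ 2 * y) * h3

theorem odd_cubic_left_inverse (h3 : (3 : S) = 0) {b u d : S} (hbu : b * u = 1)
    (hd : d ^ 3 = 0) (s : S) :
    b * (u * s - u ^ 4 * d * s ^ 3) + d * (u * s - u ^ 4 * d * s ^ 3) ^ 3 = s := by
  rw [sub_pow_three_of_three_eq_zero h3]
  linear_combination (s - u ^ 3 * d * s ^ 3) * hbu - u ^ 12 * d * s ^ 9 * hd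

theorem odd_cubic_right_inverse (h3 : (3 : S) = 0) {b u d : S} (hbu : b * u = 1)
    (hd : d ^ 3 = 0) (t : S) :
    u * (b * t + d * t ^ 3) - u ^ 4 * d * (b * t + d * t ^ 3) ^ 3 = t := by
  rw [add_pow_three_of_three_eq_zero h3]
  linear_combination (t - u * d * t ^ 3 * (b ^ 2 * u ^ 2 + b * u + 1)) * hbu
    - u ^ 4 * d * t ^ 9 * hd

theorem inverse_cubic_eq_comp_sub (h3 : (3 : S) = 0) {b u : S} (hbu : b * u = 1)
    (c d t : S) :
    u * t + u ^ 4 * (c ^ 3 * d - b ^ 3 * c) - u ^ 4 * d * t ^ 3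
      = u * (t - c) - u ^ 4 * d * (t - c) ^ 3 := by
  rw [sub_pow_three_of_three_eq_zero h3]
  linear_combination (-u * c * (b ^ 2 * u ^ 2 + b * u + 1)) * hbu

theorem cubic_left_inverse (h3 : (3 : S) = 0) {b u d : S} (hbu : b * u = 1)
    (hd : d ^ 3 = 0) (c t : S) :
    b * (u * t + u ^ 4 * (c ^ 3 * d - b ^ 3 * c) - u ^ 4 * d * t ^ 3) + c
      + d * (u * t + u ^ 4 * (c ^ 3 * d - b ^ 3 * c) - u ^ 4 * d * t ^ 3) ^ 3 = t := by
  rw [inverse_cubic_eq_comp_sub h3 hbu]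
  linear_combination odd_cubic_left_inverse h3 hbu hd (t - c)

theorem cubic_right_inverse (h3 : (3 : S) = 0) {b u d : S} (hbu : b * u = 1)
    (hd : d ^ 3 = 0) (c t : S) :
    u * (b * t + c + d * t ^ 3) + u ^ 4 * (c ^ 3 * d - b ^ 3 * c)
      - u ^ 4 * d * (b * t + c + d * t ^ 3) ^ 3 = t := by
  rw [inverse_cubic_eq_comp_sub h3 hbu]
  linear_combination odd_cubic_right_inverse h3 hbu hd t

end CharThree

/-- In characteristic 3, the substitution `t ↦ bt + c + dt³` (with `b` a unit and
`d³ = 0`) has two-sided compositional inverse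
`t ↦ b⁻¹t + b⁻⁴(c³d − b³c) − b⁻⁴d t³`. -/
theorem comp_inverse_char_three {R : Type*} [CommRing R] (h3 : (3 : R) = 0)
    (b : Rˣ) (c d : R) (hd : d ^ 3 = 0) :
    let bi : R := ((b⁻¹ : Rˣ) : R)
    let h : R[X] := C (b : R) * X + C c + C d * X ^ 3
    let h' : R[X] := C bi * X + C (bi ^ 4 * (c ^ 3 * d - (b : R) ^ 3 * c))
      - C (bi ^ 4 * d) * X ^ 3
    h.comp h' = X ∧ h'.comp h = X := by
  intro bi h h'
  have h3X : (3 : R[X]) = 0 := by rw [← map_ofNat C 3, h3, map_zero]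
  have hbu : C (b : R) * C bi = 1 := by rw [← C_mul, Units.mul_inv, C_1]
  have hdX : C d ^ 3 = 0 := by rw [← C_pow, hd, C_0]
  simp only [h, h', add_comp, sub_comp, mul_comp, C_comp, X_comp, pow_comp, map_mul, map_pow,
    map_sub]
  exact ⟨cubic_left_inverse h3X hbu hdX (C c) X, cubic_right_inverse h3X hbu hdX (C c) X⟩
end

section
/- Let R be a commutative ring with 2 = 0, let b be a unit of R, let c, d, e ∈ R with d⁴ = 0 and e² = 0, let λ ∈ R, and let a ∈ R with a² = 1. Set h = b·X + c + d·X² + e·X⁴, g = a·X + λ(a+1)·X² + (a+1)·X⁴, and g′ = a·X + (a+1)·b⁻¹·(c + λc² + c⁴) + (a+1)·(b⁻¹d + λb)·X² + (a+1)·(b⁻¹e + λb⁻¹d² + b³)·X⁴ in R[X]. Then g.comp h = h.comp g′; that is, the conjugate of the μ₂-substitution g by h is g′. -/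
/-!
Squaring is additive in characteristic 2, so `e² = 0` and `d⁴ = 0` give `h² = b²X² + c² + d²X⁴`
and `h⁴ = b⁴X⁴ + c⁴`. Since `(a + 1)² = a² + 1 = 0`, every `g′ = aX + (a + 1)·m` has `g′² = X²`
and `g′⁴ = X⁴`, so `h ∘ g′ = b·g′ + c + dX² + eX⁴`. Comparing with
`g ∘ h = a·h + λ(a + 1)·h² + (a + 1)·h⁴` determines `b·m`, which gives the stated `g′`.
-/

section CharTwo

variable {S : Type*} [CommRing S]

theorem add_sq_of_two_eq_zero (h2 : (2 : S) = 0) (x y : S) :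
    (x + y) ^ 2 = x ^ 2 + y ^ 2 := by
  linear_combination x * y * h2

theorem add_one_sq_eq_zero (h2 : (2 : S) = 0) {a : S} (ha : a ^ 2 = 1) : (a + 1) ^ 2 = 0 := by
  linear_combination ha + (a + 1) * h2

theorem mu2_sq (h2 : (2 : S) = 0) {a : S} (ha : a ^ 2 = 1) (x m : S) :
    (a * x + (a + 1) * m) ^ 2 = x ^ 2 := by
  rw [add_sq_of_two_eq_zero h2, mul_pow, mul_pow, add_one_sq_eq_zero h2 ha, ha]
  ring

theorem mu2_pow_four (h2 : (2 : S) = 0) {a : S} (ha : a ^ 2 = 1) (x m : S) :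
    (a * x + (a + 1) * m) ^ 4 = x ^ 4 := by
  rw [show 4 = 2 * 2 from rfl, pow_mul, mu2_sq h2 ha, ← pow_mul]

theorem cusp_sq (h2 : (2 : S) = 0) (b c d : S) {e : S} (he : e ^ 2 = 0) (x : S) :
    (b * x + c + d * x ^ 2 + e * x ^ 4) ^ 2 = b ^ 2 * x ^ 2 + c ^ 2 + d ^ 2 * x ^ 4 := by
  simp only [add_sq_of_two_eq_zero h2, mul_pow, he]
  ring

theorem cusp_pow_four (h2 : (2 : S) = 0) (b c : S) {d e : S} (hd : d ^ 4 = 0) (he : e ^ 2 = 0)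
    (x : S) : (b * x + c + d * x ^ 2 + e * x ^ 4) ^ 4 = b ^ 4 * x ^ 4 + c ^ 4 := by
  rw [show 4 = 2 * 2 from rfl, pow_mul, cusp_sq h2 b c d he]
  simp only [add_sq_of_two_eq_zero h2, mul_pow, ← pow_mul, hd]
  ring

theorem mu2_comp_cusp (h2 : (2 : S) = 0) {a : S} (ha : a ^ 2 = 1) (l b c : S) {d e : S}
    (hd : d ^ 4 = 0) (he : e ^ 2 = 0) {x m : S}
    (hm : b * m = c + l * c ^ 2 + c ^ 4 + (d + l * b ^ 2) * x ^ 2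
      + (e + l * d ^ 2 + b ^ 4) * x ^ 4) :
    a * (b * x + c + d * x ^ 2 + e * x ^ 4) + l * (a + 1) * (b * x + c + d * x ^ 2 + e * x ^ 4) ^ 2
        + (a + 1) * (b * x + c + d * x ^ 2 + e * x ^ 4) ^ 4
      = b * (a * x + (a + 1) * m) + c + d * (a * x + (a + 1) * m) ^ 2
        + e * (a * x + (a + 1) * m) ^ 4 := by
  rw [cusp_sq h2 b c d he, cusp_pow_four h2 b c hd he, mu2_sq h2 ha, mu2_pow_four h2 ha]
  linear_combination (-(a + 1)) * hm - (c + d * x ^ 2 + e * x ^ 4) * h2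

end CharTwo

open Polynomial

/-- In characteristic 2, the conjugate of the μ₂-substitution
`g = a·X + λ(a+1)·X² + (a+1)·X⁴` (with `a² = 1`) by
`h = b·X + c + d·X² + e·X⁴` is
`g′ = a·X + (a+1)b⁻¹(c + λc² + c⁴) + (a+1)(b⁻¹d + λb)·X²
      + (a+1)(b⁻¹e + λb⁻¹d² + b³)·X⁴`, i.e. `g ∘ h = h ∘ g′`. -/
theorem mu2_conj_char_two {R : Type*} [CommRing R] (h2 : (2 : R) = 0)
    (b : Rˣ) (c d e : R) (hd : d ^ 4 = 0) (he : e ^ 2 = 0) (l : R)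
    (a : R) (ha : a ^ 2 = 1) :
    let bi : R := ((b⁻¹ : Rˣ) : R)
    let h : R[X] := C (b : R) * X + C c + C d * X ^ 2 + C e * X ^ 4
    let g : R[X] := C a * X + C (l * (a + 1)) * X ^ 2 + C (a + 1) * X ^ 4
    let g' : R[X] := C a * X + C ((a + 1) * bi * (c + l * c ^ 2 + c ^ 4))
      + C ((a + 1) * (bi * d + l * (b : R))) * X ^ 2
      + C ((a + 1) * (bi * e + l * bi * d ^ 2 + (b : R) ^ 3)) * X ^ 4
    g.comp h = h.comp g' := by
  intro bi h g g'
  set m : R[X] := C (bi * (c + l * c ^ 2 + c ^ 4)) + C (bi * d + l * b) * X ^ 2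
    + C (bi * e + l * bi * d ^ 2 + (b : R) ^ 3) * X ^ 4
  have hg' : g' = C a * X + (C a + 1) * m := by
    simp only [g', m, map_mul, map_add, map_one]
    ring
  have hbm : C (b : R) * m = C c + C l * C c ^ 2 + C c ^ 4
      + (C d + C l * C (b : R) ^ 2) * X ^ 2 + (C e + C l * C d ^ 2 + C (b : R) ^ 4) * X ^ 4 := by
    have hbi : C (b : R) * C bi = 1 := by rw [← C_mul, Units.mul_inv, map_one]
    simp only [m, map_mul, map_add, map_pow]
    linear_combination
      (C c + C l * C c ^ 2 + C c ^ 4 + C d * X ^ 2 + (C e + C l * C d ^ 2) * X ^ 4) * hbi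
  have h2' : (2 : R[X]) = 0 := by rw [← map_ofNat C 2, h2, map_zero]
  have hd' : C d ^ 4 = 0 := by rw [← map_pow, hd, map_zero]
  have he' : C e ^ 2 = 0 := by rw [← map_pow, he, map_zero]
  have ha' : C a ^ 2 = 1 := by rw [← map_pow, ha, map_one]
  rw [hg']
  simp only [g, h, add_comp, mul_comp, C_comp, X_comp, pow_comp, one_comp, map_mul, map_add,
    map_one]
  exact mu2_comp_cusp h2' ha' (C l) (C (b : R)) (C c) hd' he' hbm
end

section
/- Let R be a commutative ring with 2 = 0, let λ ∈ R, and let z₁, z₂ ∈ R with z₁⁴ = 0 and z₂⁴ = 0. For z ∈ R put t_z = X + z + λz²·X² + z²·X⁴ ∈ R[X]. Then t_{z₁}.comp t_{z₂} = t_{z₁ + z₂ + λz₁²z₂²} and (z₁ + z₂ + λz₁²z₂²)⁴ = 0. In particular, the substitutions t_z compose according to the group law z₁ ∗ z₂ = z₁ + z₂ + λz₁²z₂² on {z | z⁴ = 0}, which is the group law of the 2-torsion subgroup scheme M₂ = Spec k[z]/(z⁴) of the supersingular elliptic curve y² + λy = x³. -/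
/-!
In characteristic 2 squaring is additive, so for `z⁴ = 0` one gets `t_z² = X² + z²` and
`t_z⁴ = X⁴`. Substituting `t_{z₂}` into `t_{z₁}` therefore gives
`X + (z₁ + z₂ + λz₁²z₂²) + λ(z₁² + z₂²)X² + (z₁² + z₂²)X⁴`, and `z₁² + z₂²` is the square of
`w = z₁ + z₂ + λz₁²z₂²` because `λ²z₁⁴z₂⁴ = 0`. Squaring once more gives `w⁴ = z₁⁴ + z₂⁴ = 0`.
-/

open Polynomial

theorem add_sq_of_two_eq_zero_s16 {A : Type*} [CommRing A] (h2 : (2 : A) = 0) (a b : A) :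
    (a + b) ^ 2 = a ^ 2 + b ^ 2 := by
  linear_combination (a * b) * h2

theorem Polynomial.two_eq_zero {R : Type*} [CommRing R] (h2 : (2 : R) = 0) :
    (2 : R[X]) = 0 := by
  rw [← map_ofNat C 2, h2, map_zero]

namespace M2

variable {R : Type*} [CommRing R]

noncomputable def subst (l z : R) : R[X] :=
  X + C z + C (l * z ^ 2) * X ^ 2 + C (z ^ 2) * X ^ 4

def law (l z₁ z₂ : R) : R :=
  z₁ + z₂ + l * z₁ ^ 2 * z₂ ^ 2

theorem subst_sq (h2 : (2 : R) = 0) (l : R) {z : R} (hz : z ^ 4 = 0) :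
    subst l z ^ 2 = X ^ 2 + C (z ^ 2) := by
  have h2X := Polynomial.two_eq_zero h2
  have hzX : C z ^ 4 = 0 := by rw [← C_pow, hz, C_0]
  simp only [subst, add_sq_of_two_eq_zero_s16 h2X, C_mul, C_pow]
  linear_combination (C l ^ 2 * X ^ 4 + X ^ 8) * hzX

theorem subst_pow_four (h2 : (2 : R) = 0) (l : R) {z : R} (hz : z ^ 4 = 0) :
    subst l z ^ 4 = X ^ 4 := by
  have hzX : C z ^ 4 = 0 := by rw [← C_pow, hz, C_0]
  rw [show 4 = 2 * 2 from rfl, pow_mul, subst_sq h2 l hz,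
    add_sq_of_two_eq_zero_s16 (Polynomial.two_eq_zero h2), C_pow, ← pow_mul, ← pow_mul, hzX,
    add_zero]

theorem law_sq (h2 : (2 : R) = 0) (l z₁ : R) {z₂ : R} (hz₂ : z₂ ^ 4 = 0) :
    law l z₁ z₂ ^ 2 = z₁ ^ 2 + z₂ ^ 2 := by
  simp only [law, add_sq_of_two_eq_zero_s16 h2]
  linear_combination (l ^ 2 * z₁ ^ 4) * hz₂

theorem law_pow_four (h2 : (2 : R) = 0) (l : R) {z₁ z₂ : R}
    (hz₁ : z₁ ^ 4 = 0) (hz₂ : z₂ ^ 4 = 0) : law l z₁ z₂ ^ 4 = 0 := by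
  rw [show 4 = 2 * 2 from rfl, pow_mul, law_sq h2 l z₁ hz₂, add_sq_of_two_eq_zero_s16 h2,
    ← pow_mul, ← pow_mul, hz₁, hz₂, add_zero]

theorem subst_comp_subst (h2 : (2 : R) = 0) (l z₁ : R) {z₂ : R} (hz₂ : z₂ ^ 4 = 0) :
    (subst l z₁).comp (subst l z₂) = subst l (law l z₁ z₂) := by
  have hcomp : (subst l z₁).comp (subst l z₂) =
      subst l z₂ + C z₁ + C (l * z₁ ^ 2) * subst l z₂ ^ 2 + C (z₁ ^ 2) * subst l z₂ ^ 4 := by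
    simp only [subst, add_comp, mul_comp, pow_comp, X_comp, C_comp]
  rw [hcomp, subst_sq h2 l hz₂, subst_pow_four h2 l hz₂, subst, subst, law_sq h2 l z₁ hz₂, law]
  simp only [C_add, C_mul, C_pow]
  ring

end M2

/-- In characteristic 2, the substitutions `t_z = X + z + λz²·X² + z²·X⁴`
(for `z⁴ = 0`) compose according to the group law
`z₁ ∗ z₂ = z₁ + z₂ + λz₁²z₂²` of the 2-torsion subgroup scheme `M₂` of the
supersingular elliptic curve `y² + λy = x³`: one has
`t_{z₁} ∘ t_{z₂} = t_{z₁ + z₂ + λz₁²z₂²}` and `(z₁ + z₂ + λz₁²z₂²)⁴ = 0`. -/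
theorem M2_substitutions_comp_char_two {R : Type*} [CommRing R] (h2 : (2 : R) = 0)
    (l : R) (z₁ z₂ : R) (hz₁ : z₁ ^ 4 = 0) (hz₂ : z₂ ^ 4 = 0) :
    let t : R → R[X] := fun z => X + C z + C (l * z ^ 2) * X ^ 2 + C (z ^ 2) * X ^ 4
    (t z₁).comp (t z₂) = t (z₁ + z₂ + l * z₁ ^ 2 * z₂ ^ 2) ∧
      (z₁ + z₂ + l * z₁ ^ 2 * z₂ ^ 2) ^ 4 = 0 :=
  ⟨M2.subst_comp_subst h2 l z₁ hz₂, M2.law_pow_four h2 l hz₁ hz₂⟩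
end

section
/- Let R be a commutative ring with 2 = 0, let μ be a unit of R, and let a ∈ R with a² = 0. For λ ∈ R set g_{λ,a} = X + λa·X² + a·X⁴ ∈ R[X]. Then g_{μ²,a}.comp (μ·X) = (μ·X).comp g_{1, μ³a}, and (μ³a)² = 0. Hence conjugation by the substitution t ↦ μt carries the α₂-action with parameter λ = μ² to the α₂-action with parameter λ = 1. -/
open Polynomial

/-- The paper's `g_{λ,a}`: for `a² = 0`, `t ↦ g_{λ,a}(t)` is the α₂-action with parameter `λ`. -/
noncomputable def alpha2Poly {R : Type*} [CommSemiring R] (l a : R) : R[X] :=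
  X + C (l * a) * X ^ 2 + C a * X ^ 4

/-- Both sides equal `μX + μ⁴λa·X² + μ⁴a·X⁴`. -/
theorem alpha2Poly_comp_C_mul_X {R : Type*} [CommSemiring R] (l a μ : R) :
    (alpha2Poly (μ ^ 2 * l) a).comp (C μ * X) = (C μ * X).comp (alpha2Poly l (μ ^ 3 * a)) := by
  simp only [alpha2Poly, add_comp, mul_comp, pow_comp, X_comp, C_comp, map_mul, map_pow]
  ring

theorem alpha2_parameter_normalization_char_two_general {R : Type*} [CommRing R]
    (μ : Rˣ) (a : R) (ha : a ^ 2 = 0) :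
    let g : R → R → R[X] := fun l a => X + C (l * a) * X ^ 2 + C a * X ^ 4
    (g ((μ : R) ^ 2) a).comp (C (μ : R) * X) =
        (C (μ : R) * X).comp (g 1 ((μ : R) ^ 3 * a)) ∧
      ((μ : R) ^ 3 * a) ^ 2 = 0 := by
  intro g
  have conj := alpha2Poly_comp_C_mul_X (1 : R) a μ
  rw [mul_one] at conj
  exact ⟨conj, by rw [mul_pow, ha, mul_zero]⟩

/-- In characteristic 2, conjugation by the substitution `t ↦ μt` (with `μ` a
unit) carries the α₂-action with parameter `λ = μ²` to the α₂-action with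
parameter `λ = 1`: with `g_{λ,a} = X + λa·X² + a·X⁴` one has
`g_{μ²,a} ∘ (μ·X) = (μ·X) ∘ g_{1,μ³a}` and `(μ³a)² = 0`. -/
theorem alpha2_parameter_normalization_char_two {R : Type*} [CommRing R]
    (h2 : (2 : R) = 0) (μ : Rˣ) (a : R) (ha : a ^ 2 = 0) :
    let g : R → R → R[X] := fun l a => X + C (l * a) * X ^ 2 + C a * X ^ 4
    (g ((μ : R) ^ 2) a).comp (C (μ : R) * X) =
        (C (μ : R) * X).comp (g 1 ((μ : R) ^ 3 * a)) ∧
      ((μ : R) ^ 3 * a) ^ 2 = 0 :=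
  alpha2_parameter_normalization_char_two_general μ a ha
end
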